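/- Let R be a commutative ring, A a commutative R-algebra, Q an R-derivation of A, and K a set of R-derivations of A. Write span_A(K) for the A-submodule of R-linear endomorphisms of A generated by K (i.e. finite sums Σ aᵢ·kᵢ with aᵢ ∈ A, kᵢ ∈ K). Assume that for every k ∈ K the commutator Q∘k − k∘Q lies in span_A(K), and that the composite Q∘Q lies in span_A(K). Then for every f ∈ A satisfying k f = 0 for all k ∈ K, one has: (i) k (Q f) = 0 for all k ∈ K, and (ii) Q (Q f) = 0. -/
import Mathlib

lemma span_apply_zero {R A : Type*} [CommRing R] [CommRing A] [Algebra R A]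
    (K : Set (Derivation R A A)) (f : A) (hf : ∀ k ∈ K, k f = 0)
    {T : A →ₗ[R] A}
    (hT : T ∈ Submodule.span A ((fun d : Derivation R A A => d.toLinearMap) '' K)) :
    T f = 0 := by
  induction hT using Submodule.span_induction with
  | mem x hx =>
    obtain ⟨d, hd, rfl⟩ := hx
    exact hf d hd
  | zero => simp
  | add x y _ _ hx hy => simp [LinearMap.add_apply, hx, hy]
  | smul a x _ hx => simp [LinearMap.smul_apply, hx]

/-- Algebraic model of a weak Q-manifold: `A` is the algebra of functions, `Q` an
`R`-derivation (the almost-Q structure), and `K` a set of `R`-derivations generating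
(as an `A`-module of `R`-linear endomorphisms) the distribution `𝒦`.  If
`[Q, k] ∈ span_A K` for all `k ∈ K` and `Q ∘ Q ∈ span_A K`, then on functions `f`
annihilated by `K` one has `k (Q f) = 0` for all `k ∈ K` and `Q (Q f) = 0`. -/
theorem weakQ_restricts_to_differential
    {R A : Type*} [CommRing R] [CommRing A] [Algebra R A]
    (Q : Derivation R A A) (K : Set (Derivation R A A))
    (hK : ∀ k ∈ K,
      Q.toLinearMap ∘ₗ Derivation.toLinearMap k - Derivation.toLinearMap k ∘ₗ Q.toLinearMap ∈
        Submodule.span A ((fun d : Derivation R A A => d.toLinearMap) '' K))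
    (hQQ : Q.toLinearMap ∘ₗ Q.toLinearMap ∈
        Submodule.span A ((fun d : Derivation R A A => d.toLinearMap) '' K))
    (f : A) (hf : ∀ k ∈ K, k f = 0) :
    (∀ k ∈ K, k (Q f) = 0) ∧ Q (Q f) = 0 := by
  constructor
  · intro k hk
    have h := span_apply_zero K f hf (hK k hk)
    simp only [LinearMap.sub_apply, LinearMap.comp_apply] at h
    rw [show Derivation.toLinearMap k f = k f from rfl, hf k hk, map_zero, zero_sub,
      neg_eq_zero] at h
    exact h
  · have h := span_apply_zero K f hf hQQ
    simpa using h
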